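/- arXiv:math/0411268 — 8 statements merged into one kernel-verified Lean document; each statement's English description precedes it below -/
import Mathlib

section
/- Generalized associativity: let Q be a set and let g₁, h₁, g₂, h₂ : Q × Q → Q be binary quasigroup operations on Q satisfying g₁(h₁(x, y), z) = g₂(x, h₂(y, z)) for all x, y, z ∈ Q. Then there exists a group structure (Q', *) and the operation g₁ is isotopic to *: i.e., there exist a group G on a set equipotent with Q and bijections α, β, γ : Q → G with γ(g₁(x, y)) = α(x) * β(y). -/
/-- Generalized associativity implies that g₁ is isotopic to a group. -/
theorem generalized_associativity_isotopic_group
    {Q : Type} [Nonempty Q] (g₁ h₁ g₂ h₂ : Q → Q → Q)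
    (hg₁ : ∀ a : Q, Function.Bijective (g₁ a) ∧ Function.Bijective (fun x => g₁ x a))
    (hh₁ : ∀ a : Q, Function.Bijective (h₁ a) ∧ Function.Bijective (fun x => h₁ x a))
    (hg₂ : ∀ a : Q, Function.Bijective (g₂ a) ∧ Function.Bijective (fun x => g₂ x a))
    (hh₂ : ∀ a : Q, Function.Bijective (h₂ a) ∧ Function.Bijective (fun x => h₂ x a))
    (hassoc : ∀ x y z : Q, g₁ (h₁ x y) z = g₂ x (h₂ y z)) :
    ∃ (G : Type) (_ : Group G) (α β γ : Q → G),
      Function.Bijective α ∧ Function.Bijective β ∧ Function.Bijective γ ∧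
      ∀ x y : Q, γ (g₁ x y) = α x * β y := by
  classical
  obtain ⟨e⟩ := ‹Nonempty Q›
  -- basic bijections
  let φ : Q ≃ Q := Equiv.ofBijective (fun x => h₁ x e) (hh₁ e).2
  let ψ : Q ≃ Q := Equiv.ofBijective (h₂ e) (hh₂ e).1
  let c : Q := φ e
  let L : Q ≃ Q := Equiv.ofBijective (g₁ c) (hg₁ c).1
  let R : Q ≃ Q := Equiv.ofBijective (fun t => g₁ t e) (hg₁ e).2
  let k : Q ≃ Q := Equiv.ofBijective (h₁ e) (hh₁ e).1
  -- step A: g₂ in terms of g₁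
  have hA : ∀ x w, g₂ x w = g₁ (φ x) (ψ.symm w) := by
    intro x w
    have := hassoc x e (ψ.symm w)
    have hw : h₂ e (ψ.symm w) = w := ψ.apply_symm_apply w
    simpa [φ, ψ, hw] using this.symm
  -- step C
  have hC : ∀ x y z, g₁ (h₁ x y) z = g₁ (φ x) (L.symm (g₁ (k y) z)) := by
    intro x y z
    have hB : ψ.symm (h₂ y z) = L.symm (g₁ (k y) z) := by
      have h1 : g₁ (h₁ e y) z = g₁ (φ e) (ψ.symm (h₂ y z)) := by
        rw [hassoc, hA]
      have h2 : L (ψ.symm (h₂ y z)) = g₁ (k y) z := by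
        simpa [L, k, c] using h1.symm
      rw [← h2, Equiv.symm_apply_apply]
    rw [hassoc, hA, hB]
  -- step D
  have hD : ∀ x y, h₁ x y = R.symm (g₁ (φ x) (L.symm (R (k y)))) := by
    intro x y
    have := hC x y e
    have hR : R (h₁ x y) = g₁ (φ x) (L.symm (R (k y))) := by
      simpa [R] using this
    rw [← hR, Equiv.symm_apply_apply]
  -- key identity
  have key : ∀ u w z, g₁ (R.symm (g₁ u (L.symm (R w)))) z = g₁ u (L.symm (g₁ w z)) := by
    intro u w z
    have := hC (φ.symm u) (k.symm w) z
    rw [hD (φ.symm u) (k.symm w)] at this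
    simpa using this
  -- the associative operation
  let star : Q → Q → Q := fun a b => g₁ (R.symm a) (L.symm b)
  have star_assoc : ∀ a b c, star (star a b) c = star a (star b c) := by
    intro a b cc
    have := key (R.symm a) (R.symm b) (L.symm cc)
    simpa [star] using this
  -- left translation surjective
  have left_surj : ∀ a b, ∃ t, star a t = b := by
    intro a b
    obtain ⟨t, ht⟩ := (hg₁ (R.symm a)).1.2 b
    exact ⟨L t, by simpa [star] using ht⟩
  -- right translation surjective
  have right_surj : ∀ a b, ∃ t, star t a = b := by
    intro a b
    obtain ⟨s, hs⟩ := (hg₁ (L.symm a)).2.2 b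
    exact ⟨R s, by simpa [star] using hs⟩
  -- identity element
  obtain ⟨one, hone⟩ := right_surj e e
  have one_mul' : ∀ b, star one b = b := by
    intro b
    obtain ⟨t, ht⟩ := left_surj e b
    rw [← ht, ← star_assoc, hone]
  -- inverses
  choose inv hinv using fun b => right_surj b one
  letI : Mul Q := ⟨star⟩
  letI : One Q := ⟨one⟩
  letI : Inv Q := ⟨inv⟩
  letI grp : Group Q := Group.ofLeftAxioms star_assoc one_mul' hinv
  refine ⟨Q, grp, (fun x => R x), (fun y => L y), id, R.bijective, L.bijective,
    Function.bijective_id, ?_⟩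
  intro x y
  show g₁ x y = star (R x) (L y)
  simp [star]
end

section
/- In the situation of generalized associativity—g₁(h₁(x, y), z) = g₂(x, h₂(y, z)) for all x, y, z, where g₁, h₁, g₂, h₂ are binary quasigroup operations on a set Q—all four operations g₁, h₁, g₂, h₂ are isotopic to the same group. -/
/-- Under generalized associativity all four quasigroup operations
are isotopic to the same group. -/
theorem generalized_associativity_all_isotopic_same_group
    {Q : Type} [Nonempty Q] (g₁ h₁ g₂ h₂ : Q → Q → Q)
    (hg₁ : ∀ a : Q, Function.Bijective (g₁ a) ∧ Function.Bijective (fun x => g₁ x a))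
    (hh₁ : ∀ a : Q, Function.Bijective (h₁ a) ∧ Function.Bijective (fun x => h₁ x a))
    (hg₂ : ∀ a : Q, Function.Bijective (g₂ a) ∧ Function.Bijective (fun x => g₂ x a))
    (hh₂ : ∀ a : Q, Function.Bijective (h₂ a) ∧ Function.Bijective (fun x => h₂ x a))
    (hassoc : ∀ x y z : Q, g₁ (h₁ x y) z = g₂ x (h₂ y z)) :
    ∃ (G : Type) (_ : Group G),
      ∀ F ∈ ([g₁, h₁, g₂, h₂] : List (Q → Q → Q)),
        ∃ α β γ : Q → G,
          Function.Bijective α ∧ Function.Bijective β ∧ Function.Bijective γ ∧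
          ∀ x y : Q, γ (F x y) = α x * β y := by
  classical
  obtain ⟨e⟩ : Nonempty Q := inferInstance
  -- translations as equivalences
  let σe : Q ≃ Q := Equiv.ofBijective (fun u => g₁ u e) (hg₁ e).2
  let φe : Q ≃ Q := Equiv.ofBijective (fun x => h₁ x e) (hh₁ e).2
  let ψe : Q ≃ Q := Equiv.ofBijective (fun z => h₂ e z) (hh₂ e).1
  let θe : Q ≃ Q := Equiv.ofBijective (fun w => g₂ e w) (hg₂ e).1
  let χe : Q ≃ Q := Equiv.ofBijective (fun y => h₁ e y) (hh₁ e).1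
  let τe : Q ≃ Q := Equiv.ofBijective (fun y => h₂ y e) (hh₂ e).2
  let μe : Q ≃ Q := τe.trans ψe.symm
  -- fact1 : g₂ x w = g₁ (h₁ x e) (ψe.symm w)
  have fact1 : ∀ x w, g₂ x w = g₁ (h₁ x e) (ψe.symm w) := by
    intro x w
    have h := hassoc x e (ψe.symm w)
    have h2 : h₂ e (ψe.symm w) = w := ψe.apply_symm_apply w
    rw [h2] at h
    exact h.symm
  -- fact2 : θe (h₂ y z) = g₁ (h₁ e y) z
  have fact2 : ∀ y z, θe (h₂ y z) = g₁ (h₁ e y) z := fun y z => (hassoc e y z).symm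
  -- fact6 : σe (h₁ x y) = g₁ (h₁ x e) (μe y)
  have fact6 : ∀ x y, σe (h₁ x y) = g₁ (h₁ x e) (μe y) := by
    intro x y
    have h := hassoc x y e
    rw [fact1 x (h₂ y e)] at h
    exact h
  -- the principal isotope m and the group operation p
  let m : Q → Q → Q := fun a c => g₁ (σe.symm a) c
  let p : Q → Q → Q := fun b z => ψe.symm (θe.symm (g₁ (h₁ e (μe.symm b)) z))
  have keym : ∀ a b z, m (m a b) z = m a (p b z) := by
    intro a b z
    have hφ : h₁ (φe.symm (σe.symm a)) e = σe.symm a := φe.apply_symm_apply _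
    set x := φe.symm (σe.symm a) with hx
    set y := μe.symm b with hy
    have hmab : m a b = σe (h₁ x y) := by
      show g₁ (σe.symm a) b = _
      rw [fact6 x y, hφ, hy, μe.apply_symm_apply]
    have h2 : h₂ y z = θe.symm (g₁ (h₁ e y) z) :=
      (Equiv.eq_symm_apply θe).mpr (fact2 y z)
    calc m (m a b) z = g₁ (σe.symm (σe (h₁ x y))) z := by rw [hmab]
      _ = g₁ (h₁ x y) z := by rw [σe.symm_apply_apply]
      _ = g₂ x (h₂ y z) := hassoc x y z
      _ = g₁ (h₁ x e) (ψe.symm (h₂ y z)) := fact1 x _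
      _ = g₁ (σe.symm a) (ψe.symm (θe.symm (g₁ (h₁ e y) z))) := by rw [hφ, h2]
      _ = m a (p b z) := rfl
  have lcancel : ∀ (a : Q) {u v : Q}, m a u = m a v → u = v :=
    fun a _ _ h => (hg₁ (σe.symm a)).1.injective h
  have passoc : ∀ a b c, p (p a b) c = p a (p b c) := by
    intro a b c
    apply lcancel e
    have h1 : m e (p (p a b) c) = m (m (m e a) b) c := by
      rw [← keym, ← keym]
    have h2 : m e (p a (p b c)) = m (m (m e a) b) c := by
      rw [← keym, ← keym]
    rw [h1, h2]
  have pleft : ∀ b, Function.Bijective (p b) := by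
    intro b
    exact ψe.symm.bijective.comp (θe.symm.bijective.comp (hg₁ (h₁ e (μe.symm b))).1)
  have pright : ∀ z, Function.Bijective (fun b => p b z) := by
    intro z
    exact ψe.symm.bijective.comp (θe.symm.bijective.comp
      ((hg₁ z).2.comp ((hh₁ e).1.comp μe.symm.bijective)))
  -- identity element
  let pe : Q ≃ Q := Equiv.ofBijective (fun b => p b e) (pright e)
  let one : Q := pe.symm e
  have hone : p one e = e := pe.apply_symm_apply e
  have one_mul' : ∀ x, p one x = x := by
    intro x
    obtain ⟨t, ht⟩ := (pleft e).2 x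
    calc p one x = p one (p e t) := by rw [ht]
      _ = p (p one e) t := (passoc _ _ _).symm
      _ = p e t := by rw [hone]
      _ = x := ht
  let inv : Q → Q := fun x => (Equiv.ofBijective (fun b => p b x) (pright x)).symm one
  have hinv : ∀ x, p (inv x) x = one := fun x =>
    (Equiv.ofBijective (fun b => p b x) (pright x)).apply_symm_apply one
  letI : Mul Q := ⟨p⟩
  letI : One Q := ⟨one⟩
  letI : Inv Q := ⟨inv⟩
  letI grp : Group Q := Group.ofLeftAxioms passoc one_mul' hinv
  -- key isotopy identity for g₁
  have key1 : ∀ x y, p (μe (χe.symm x)) y = ψe.symm (θe.symm (g₁ x y)) := by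
    intro x y
    show ψe.symm (θe.symm (g₁ (h₁ e (μe.symm (μe (χe.symm x)))) y)) = _
    rw [μe.symm_apply_apply]
    have hχ : h₁ e (χe.symm x) = x := χe.apply_symm_apply x
    rw [hχ]
  refine ⟨Q, grp, ?_⟩
  intro F hF
  simp only [List.mem_cons, List.not_mem_nil, or_false] at hF
  obtain h | h | h | h := hF <;> rw [h]
  · -- g₁
    refine ⟨fun x => μe (χe.symm x), id, fun w => ψe.symm (θe.symm w),
      μe.bijective.comp χe.symm.bijective, Function.bijective_id,
      ψe.symm.bijective.comp θe.symm.bijective, ?_⟩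
    intro x y
    exact (key1 x y).symm
  · -- h₁
    refine ⟨fun x => μe (χe.symm (h₁ x e)), μe, fun w => ψe.symm (θe.symm (σe w)),
      μe.bijective.comp (χe.symm.bijective.comp (hh₁ e).2), μe.bijective,
      ψe.symm.bijective.comp (θe.symm.bijective.comp σe.bijective), ?_⟩
    intro x y
    show ψe.symm (θe.symm (σe (h₁ x y))) = p (μe (χe.symm (h₁ x e))) (μe y)
    rw [fact6 x y, key1]
  · -- g₂
    refine ⟨fun x => μe (χe.symm (h₁ x e)), ψe.symm, fun w => ψe.symm (θe.symm w),
      μe.bijective.comp (χe.symm.bijective.comp (hh₁ e).2), ψe.symm.bijective,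
      ψe.symm.bijective.comp θe.symm.bijective, ?_⟩
    intro x y
    show ψe.symm (θe.symm (g₂ x y)) = p (μe (χe.symm (h₁ x e))) (ψe.symm y)
    rw [fact1 x y, key1]
  · -- h₂
    refine ⟨μe, id, ψe.symm, μe.bijective, Function.bijective_id,
      ψe.symm.bijective, ?_⟩
    intro x y
    show ψe.symm (h₂ x y) = p (μe x) y
    have : p (μe x) y = ψe.symm (θe.symm (g₁ (h₁ e x) y)) := by
      show ψe.symm (θe.symm (g₁ (h₁ e (μe.symm (μe x))) y)) = _
      rw [μe.symm_apply_apply]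
    rw [this, ← fact2, θe.symm_apply_apply]
end

section
/- Let Q be a quasigroup with a two-sided identity element e (a loop) that satisfies the quadrangle criterion: whenever x₁y₁ = x₂y₂, x₁z₁ = x₂z₂, u₁y₁ = u₂y₂ hold, then u₁z₁ = u₂z₂. Then Q is a group (the operation is associative). -/
/-- A loop satisfying the quadrangle criterion is a group (associative). -/
theorem loop_quadrangle_criterion_assoc
    {Q : Type} (f : Q → Q → Q)
    (hq : ∀ a : Q, Function.Bijective (f a) ∧ Function.Bijective (fun x => f x a))
    (e : Q) (he : ∀ x : Q, f e x = x ∧ f x e = x)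
    (hquad : ∀ x₁ x₂ y₁ y₂ z₁ z₂ u₁ u₂ : Q,
      f x₁ y₁ = f x₂ y₂ → f x₁ z₁ = f x₂ z₂ → f u₁ y₁ = f u₂ y₂ → f u₁ z₁ = f u₂ z₂) :
    ∀ x y z : Q, f (f x y) z = f x (f y z) := by
  intro x y z
  exact (hquad e y y e (f y z) z x (f x y)
    (by rw [(he y).1, (he y).2])
    (by rw [(he (f y z)).1])
    (by rw [(he (f x y)).2])).symm
end

section
/- Let G and H be two groups and suppose there is an isotopy between them: bijections α, β, γ : G → H with γ(x * y) = α(x) · β(y) for all x, y ∈ G. Then G and H are isomorphic as groups. -/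
/-- Bruck: Isotopic groups are isomorphic. -/
theorem isotopic_groups_isomorphic
    {G H : Type} [Group G] [Group H] (α β γ : G → H)
    (hα : Function.Bijective α) (hβ : Function.Bijective β) (hγ : Function.Bijective γ)
    (h : ∀ x y : G, γ (x * y) = α x * β y) :
    Nonempty (G ≃* H) := by
  have hbij : Function.Bijective (fun x => (γ 1)⁻¹ * γ x) := by
    constructor
    · intro x y hxy
      exact hγ.1 (mul_left_cancel hxy)
    · intro z
      obtain ⟨x, hx⟩ := hγ.2 (γ 1 * z)
      exact ⟨x, by simp [hx]⟩
  refine ⟨MulEquiv.mk' (Equiv.ofBijective _ hbij) ?_⟩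
  intro x y
  simp only [Equiv.ofBijective_apply]
  have h1 : γ 1 = α 1 * β 1 := by simpa using h 1 1
  have hx : γ x = α x * β 1 := by simpa using h x 1
  have hy : γ y = α 1 * β y := by simpa using h 1 y
  rw [h x y, hx, hy, h1]
  group
end

section
/- If G is a group with Aff(G) = Sym(G) (every permutation of G is of the form g ↦ α(g)*c with α ∈ Aut G, c ∈ G), then G is isomorphic to Z/1, Z/2, Z/3, or the Klein four-group V₄. -/
/-!
Permutations fixing `1` are affine maps with `c = 1`, i.e. automorphisms. If `a`, `b`, `a * b` are
all different from `1`, the transposition of `a * b` with any element outside `{1, a, b, a * b}`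
would be such a permutation that is not multiplicative; hence `G = {1, a, b, a * b}` and `|G| ≤ 4`.
Taking `a = b` shows that in a group of order `4` every element squares to `1`, so `G` is trivial,
of prime order `2` or `3`, or a Klein four-group.
-/

theorem Nat.card_eq_finsetCard_of_forall_mem {α : Type*} {s : Finset α} (h : ∀ a, a ∈ s) :
    Nat.card α = s.card :=
  (Nat.card_congr (Equiv.subtypeUnivEquiv h)).symm.trans (Nat.card_eq_finsetCard s)

theorem perm_map_mul_of_map_one {G : Type*} [Group G]
    (h : ∀ φ : Equiv.Perm G, ∃ (α : G ≃* G) (c : G), ∀ g : G, φ g = α g * c)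
    (φ : Equiv.Perm G) (hφ : φ 1 = 1) (a b : G) : φ (a * b) = φ a * φ b := by
  obtain ⟨α, c, hαc⟩ := h φ
  have hc : c = 1 := by simpa [hφ] using (hαc 1).symm
  simp only [hαc, hc, mul_one, map_mul]

section PermMapMul

variable {G : Type*} [Group G]
  (hG : ∀ φ : Equiv.Perm G, φ 1 = 1 → ∀ a b : G, φ (a * b) = φ a * φ b)
include hG

theorem mem_of_perm_map_mul [DecidableEq G] {a b : G} (ha : a ≠ 1) (hb : b ≠ 1)
    (hab : a * b ≠ 1) (g : G) : g ∈ ({1, a, b, a * b} : Finset G) := by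
  by_contra hg
  simp only [Finset.mem_insert, Finset.mem_singleton, not_or] at hg
  obtain ⟨hg1, hga, hgb, hgab⟩ := hg
  have hσ1 : Equiv.swap (a * b) g 1 = 1 := Equiv.swap_apply_of_ne_of_ne (Ne.symm hab) (Ne.symm hg1)
  have hσ := hG _ hσ1 a b
  rw [Equiv.swap_apply_left, Equiv.swap_apply_of_ne_of_ne (by simpa using hb) (Ne.symm hga),
    Equiv.swap_apply_of_ne_of_ne (by simpa using ha) (Ne.symm hgb)] at hσ
  exact hgab hσ

theorem card_pos_and_le_four : 0 < Nat.card G ∧ Nat.card G ≤ 4 := by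
  classical
  suffices ∃ s : Finset G, s.card ≤ 4 ∧ ∀ g, g ∈ s by
    obtain ⟨s, hs, hmem⟩ := this
    rw [Nat.card_eq_finsetCard_of_forall_mem hmem]
    exact ⟨Finset.card_pos.mpr ⟨1, hmem 1⟩, hs⟩
  rcases subsingleton_or_nontrivial G with _ | _
  · exact ⟨{1}, by simp, fun g => by simp [Subsingleton.elim g 1]⟩
  obtain ⟨a, ha⟩ := exists_ne (1 : G)
  by_cases hb : ∃ b : G, b ≠ 1 ∧ a * b ≠ 1
  · obtain ⟨b, hb, hab⟩ := hb
    exact ⟨_, Finset.card_le_four, mem_of_perm_map_mul hG ha hb hab⟩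
  · push Not at hb
    refine ⟨{1, a⁻¹}, Finset.card_le_two.trans (by norm_num), fun g => ?_⟩
    by_cases hg : g = 1
    · simp [hg]
    · simp [← eq_inv_of_mul_eq_one_right (hb g hg)]

theorem mul_self_eq_one_of_card_eq_four (hcard : Nat.card G = 4) (x : G) : x * x = 1 := by
  classical
  by_contra hx
  have hx1 : x ≠ 1 := by rintro rfl; exact hx (mul_one 1)
  have hle := (Nat.card_eq_finsetCard_of_forall_mem (mem_of_perm_map_mul hG hx1 hx1 hx)).le
  rw [Finset.insert_idem] at hle
  have := hle.trans Finset.card_le_three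
  omega

theorem isKleinFour_of_card_eq_four (hcard : Nat.card G = 4) : IsKleinFour G where
  card_four := hcard
  exponent_two := by
    have : Finite G := Nat.finite_of_card_ne_zero (by omega)
    have : Nontrivial G := Finite.one_lt_card_iff_nontrivial.mp (by omega)
    refine (Monoid.exponent_eq_prime_iff Nat.prime_two).mpr fun g hg => orderOf_eq_prime ?_ hg
    rw [sq, mul_self_eq_one_of_card_eq_four hG hcard]

end PermMapMul

/-- If every permutation of a group G is a pseudoautomorphism
g ↦ α(g) * c, then G ≅ ℤ/1, ℤ/2, ℤ/3, or the Klein four-group. -/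
theorem aff_eq_sym_characterization {G : Type} [Group G]
    (h : ∀ φ : Equiv.Perm G, ∃ (α : G ≃* G) (c : G), ∀ g : G, φ g = α g * c) :
    Nonempty (G ≃* Multiplicative (ZMod 1)) ∨
    Nonempty (G ≃* Multiplicative (ZMod 2)) ∨
    Nonempty (G ≃* Multiplicative (ZMod 3)) ∨
    Nonempty (G ≃* Multiplicative (ZMod 2 × ZMod 2)) := by
  have hG := perm_map_mul_of_map_one h
  obtain ⟨hpos, hle⟩ := card_pos_and_le_four hG
  interval_cases hcard : Nat.card G
  · obtain ⟨_, ⟨g⟩⟩ := Nat.card_eq_one_iff_unique.mp hcard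
    have : Unique G := uniqueOfSubsingleton g
    exact Or.inl ⟨MulEquiv.ofUnique⟩
  · have : Fact (Nat.Prime 2) := ⟨Nat.prime_two⟩
    exact Or.inr (Or.inl ⟨mulEquivOfPrimeCardEq hcard (by simp)⟩)
  · have : Fact (Nat.Prime 3) := ⟨Nat.prime_three⟩
    exact Or.inr (Or.inr (Or.inl ⟨mulEquivOfPrimeCardEq hcard (by simp)⟩))
  · have := isKleinFour_of_card_eq_four hG hcard
    exact Or.inr (Or.inr (Or.inr IsKleinFour.nonempty_mulEquiv))
end

section
/- Let Q be a finite set with a ternary quasigroup operation f : Q³ → Q that factors in both ways: there exist binary quasigroup operations g₁, h₁, g₂, h₂ on Q with f(x, y, z) = g₁(h₁(x, y), z) = g₂(x, h₂(y, z)) for all x, y, z. Then f is isotopic to an iterated group: there exist a group (G, *) and bijections α₀, α₁, α₂, α₃ : Q → G with α₀(f(x, y, z)) = α₁(x) * α₂(y) * α₃(z). -/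
private lemma aux_perm_group {Q : Type} [Nonempty Q] (f : Q → Q → Q → Q)
    (p q : Q → Equiv.Perm Q) (w : Equiv.Perm Q)
    (hfpq : ∀ x y z : Q, f x y z = p x (q z (w y)))
    (hcomm : ∀ x z : Q, q z * p x = p x * q z)
    (hp : ∀ c : Q, Function.Bijective (fun x => p x c))
    (hq : ∀ c : Q, Function.Bijective (fun z => q z c)) :
    ∃ (G : Type) (_ : Group G) (α₀ α₁ α₂ α₃ : Q → G),
      Function.Bijective α₀ ∧ Function.Bijective α₁ ∧
      Function.Bijective α₂ ∧ Function.Bijective α₃ ∧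
      ∀ x y z : Q, α₀ (f x y z) = α₁ x * α₂ y * α₃ z := by
  classical
  obtain ⟨b⟩ := ‹Nonempty Q›
  set G := Subgroup.centralizer (Set.range q) with hGdef
  have hmem : ∀ g : Equiv.Perm Q, g ∈ G ↔ ∀ z, q z * g = g * q z := by
    intro g
    constructor
    · intro hg z; exact Subgroup.mem_centralizer_iff.mp hg (q z) ⟨z, rfl⟩
    · intro h; rw [hGdef, Subgroup.mem_centralizer_iff]; rintro _ ⟨z, rfl⟩; exact h z
  have hpG : ∀ x, p x ∈ G := fun x => (hmem _).mpr fun z => hcomm x z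
  have εinj : ∀ g g' : G, (g : Equiv.Perm Q) b = (g' : Equiv.Perm Q) b → g = g' := by
    intro g g' h
    refine Subtype.ext (Equiv.ext fun d => ?_)
    obtain ⟨z, hz⟩ := (hq b).2 d
    have hz' : q z b = d := hz
    have cg := (hmem _).mp g.2 z
    have cg' := (hmem _).mp g'.2 z
    have e1 : (g : Equiv.Perm Q) d = q z ((g : Equiv.Perm Q) b) := by
      rw [← hz']
      calc (g : Equiv.Perm Q) (q z b) = ((g : Equiv.Perm Q) * q z) b := rfl
        _ = (q z * (g : Equiv.Perm Q)) b := by rw [cg]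
        _ = q z ((g : Equiv.Perm Q) b) := rfl
    have e2 : (g' : Equiv.Perm Q) d = q z ((g' : Equiv.Perm Q) b) := by
      rw [← hz']
      calc (g' : Equiv.Perm Q) (q z b) = ((g' : Equiv.Perm Q) * q z) b := rfl
        _ = (q z * (g' : Equiv.Perm Q)) b := by rw [cg']
        _ = q z ((g' : Equiv.Perm Q) b) := rfl
    rw [e1, e2, h]
  set α₁ : Q → G := fun x => ⟨p x, hpG x⟩ with hα₁def
  have hα₁ : Function.Bijective α₁ := by
    constructor
    · intro x x' h
      apply (hp b).1
      show p x b = p x' b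
      have : p x = p x' := congrArg Subtype.val h
      rw [this]
    · intro g
      obtain ⟨x, hx⟩ := (hp b).2 ((g : Equiv.Perm Q) b)
      exact ⟨x, εinj _ _ hx⟩
  have εbij : Function.Bijective (fun g : G => (g : Equiv.Perm Q) b) := by
    constructor
    · intro g g' h; exact εinj g g' h
    · intro d
      obtain ⟨x, hx⟩ := (hp b).2 d
      exact ⟨α₁ x, hx⟩
  set ε : G ≃ Q := Equiv.ofBijective _ εbij with hεdef
  have hεapp : ∀ g : G, ε g = (g : Equiv.Perm Q) b := fun g => rfl
  refine ⟨G, inferInstance, fun t => ε.symm t, α₁, fun y => ε.symm (w y),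
    fun z => ε.symm (q z b), ε.symm.bijective, hα₁,
    ε.symm.bijective.comp w.bijective, ε.symm.bijective.comp (hq b), ?_⟩
  intro x y z
  rw [Equiv.symm_apply_eq]
  set gy : G := ε.symm (w y) with hgy
  set gz : G := ε.symm (q z b) with hgz
  have hgyb : (gy : Equiv.Perm Q) b = w y := by
    rw [← hεapp gy, hgy, Equiv.apply_symm_apply]
  have hgzb : (gz : Equiv.Perm Q) b = q z b := by
    rw [← hεapp gz, hgz, Equiv.apply_symm_apply]
  have cgy := (hmem _).mp gy.2 z
  calc f x y z = p x (q z (w y)) := hfpq x y z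
    _ = p x (q z ((gy : Equiv.Perm Q) b)) := by rw [hgyb]
    _ = p x ((q z * (gy : Equiv.Perm Q)) b) := rfl
    _ = p x (((gy : Equiv.Perm Q) * q z) b) := by rw [cgy]
    _ = p x ((gy : Equiv.Perm Q) (q z b)) := rfl
    _ = p x ((gy : Equiv.Perm Q) ((gz : Equiv.Perm Q) b)) := by rw [hgzb]
    _ = ((α₁ x * gy * gz : G) : Equiv.Perm Q) b := rfl
    _ = ε (α₁ x * gy * gz) := (hεapp _).symm

private lemma aux_abcd {Q : Type} [Nonempty Q] (f : Q → Q → Q → Q)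
    (A B C D : Q → Equiv.Perm Q)
    (star : ∀ x z : Q, C z * B x = A x * D z)
    (hf : ∀ x y z : Q, f x y z = C z (B x y))
    (hB : ∀ c : Q, Function.Bijective (fun x => B x c))
    (hD : ∀ c : Q, Function.Bijective (fun z => D z c)) :
    ∃ (G : Type) (_ : Group G) (α₀ α₁ α₂ α₃ : Q → G),
      Function.Bijective α₀ ∧ Function.Bijective α₁ ∧
      Function.Bijective α₂ ∧ Function.Bijective α₃ ∧
      ∀ x y z : Q, α₀ (f x y z) = α₁ x * α₂ y * α₃ z := by
  classical
  obtain ⟨e⟩ := ‹Nonempty Q›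
  have hCz : ∀ z, C z = A e * D z * (B e)⁻¹ := by
    intro z
    rw [eq_mul_inv_iff_mul_eq]
    exact star e z
  have rel : ∀ x z, A e * D z * (B e)⁻¹ * B x = C e * B x * (D e)⁻¹ * D z := by
    intro x z
    have h1 := star x z
    have hAx : A x = C e * B x * (D e)⁻¹ := by
      rw [eq_mul_inv_iff_mul_eq]; exact (star x e).symm
    rw [hAx, hCz z] at h1
    exact h1
  refine aux_perm_group f
    (fun x => C e * B x * (C e * B e)⁻¹)
    (fun z => A e * D z * (C e * B e)⁻¹)
    (C e * B e) ?_ ?_ ?_ ?_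
  · intro x y z
    have key : C z * B x =
        C e * B x * (C e * B e)⁻¹ * (A e * D z * (C e * B e)⁻¹ * (C e * B e)) := by
      calc C z * B x = A e * D z * (B e)⁻¹ * B x := by rw [hCz]
        _ = C e * B x * (D e)⁻¹ * D z := rel x z
        _ = C e * B x * (C e * B e)⁻¹ * (A e * D z * (C e * B e)⁻¹ * (C e * B e)) := by
            rw [star e e]; group
    show f x y z =
      ((C e * B x * (C e * B e)⁻¹) * ((A e * D z * (C e * B e)⁻¹) * (C e * B e))) y
    rw [hf x y z]
    show (C z * B x) y = _
    rw [key, mul_assoc]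
  · intro x z
    show (A e * D z * (C e * B e)⁻¹) * (C e * B x * (C e * B e)⁻¹) =
      (C e * B x * (C e * B e)⁻¹) * (A e * D z * (C e * B e)⁻¹)
    calc (A e * D z * (C e * B e)⁻¹) * (C e * B x * (C e * B e)⁻¹)
        = A e * D z * (B e)⁻¹ * B x * (C e * B e)⁻¹ := by group
      _ = C e * B x * (D e)⁻¹ * D z * (C e * B e)⁻¹ := by rw [rel]
      _ = (C e * B x * (C e * B e)⁻¹) * (A e * D z * (C e * B e)⁻¹) := by
          rw [star e e]; group
  · intro c
    show Function.Bijective (fun x => (C e) ((B x) ((C e * B e)⁻¹ c)))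
    exact (C e).bijective.comp (hB ((C e * B e)⁻¹ c))
  · intro c
    show Function.Bijective (fun z => (A e) ((D z) ((C e * B e)⁻¹ c)))
    exact (A e).bijective.comp (hD ((C e * B e)⁻¹ c))

/-- A finite ternary quasigroup that factors both ways is isotopic to an
iterated group. -/
theorem ternary_quasigroup_both_factorizations_isotopic_iterated_group
    {Q : Type} [Finite Q] [Nonempty Q] (f : Q → Q → Q → Q)
    (hq1 : ∀ y z : Q, Function.Bijective (fun x => f x y z))
    (hq2 : ∀ x z : Q, Function.Bijective (fun y => f x y z))
    (hq3 : ∀ x y : Q, Function.Bijective (fun z => f x y z))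
    (g₁ h₁ g₂ h₂ : Q → Q → Q)
    (hg₁ : ∀ a : Q, Function.Bijective (g₁ a) ∧ Function.Bijective (fun x => g₁ x a))
    (hh₁ : ∀ a : Q, Function.Bijective (h₁ a) ∧ Function.Bijective (fun x => h₁ x a))
    (hg₂ : ∀ a : Q, Function.Bijective (g₂ a) ∧ Function.Bijective (fun x => g₂ x a))
    (hh₂ : ∀ a : Q, Function.Bijective (h₂ a) ∧ Function.Bijective (fun x => h₂ x a))
    (hfact1 : ∀ x y z : Q, f x y z = g₁ (h₁ x y) z)
    (hfact2 : ∀ x y z : Q, f x y z = g₂ x (h₂ y z)) :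
    ∃ (G : Type) (_ : Group G) (α₀ α₁ α₂ α₃ : Q → G),
      Function.Bijective α₀ ∧ Function.Bijective α₁ ∧
      Function.Bijective α₂ ∧ Function.Bijective α₃ ∧
      ∀ x y z : Q, α₀ (f x y z) = α₁ x * α₂ y * α₃ z := by
  classical
  refine aux_abcd f
    (fun x => Equiv.ofBijective (g₂ x) (hg₂ x).1)
    (fun x => Equiv.ofBijective (h₁ x) (hh₁ x).1)
    (fun z => Equiv.ofBijective (fun u => g₁ u z) (hg₁ z).2)
    (fun z => Equiv.ofBijective (fun y => h₂ y z) (hh₂ z).2)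
    ?_ ?_ ?_ ?_
  · intro x z
    refine Equiv.ext fun y => ?_
    show g₁ (h₁ x y) z = g₂ x (h₂ y z)
    rw [← hfact1, ← hfact2]
  · intro x y z
    exact hfact1 x y z
  · intro c
    exact (hh₁ c).2
  · intro c
    exact (hh₂ c).1
end

section
/- For every n ≥ 5 with n ≠ 6, there exists a binary quasigroup of order n that is not isotopic to any group; equivalently, there is a Latin square of order n that does not satisfy the quadrangle criterion. -/
private lemma mod_inj' {n a b : ℕ} (ha : a < 2 * n) (hb : b < 2 * n)
    (h : a % n = b % n) : a = b ∨ a = b + n ∨ b = a + n := by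
  have hn : 0 < n := by by_contra h0; omega
  rcases Nat.lt_or_ge a n with h1 | h1 <;> rcases Nat.lt_or_ge b n with h2 | h2
  · left; rwa [Nat.mod_eq_of_lt h1, Nat.mod_eq_of_lt h2] at h
  · rw [Nat.mod_eq_of_lt h1, Nat.mod_eq_sub_mod h2, Nat.mod_eq_of_lt (by omega)] at h; omega
  · rw [Nat.mod_eq_sub_mod h1, Nat.mod_eq_of_lt (by omega), Nat.mod_eq_of_lt h2] at h; omega
  · rw [Nat.mod_eq_sub_mod h1, Nat.mod_eq_sub_mod h2, Nat.mod_eq_of_lt (by omega),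
      Nat.mod_eq_of_lt (by omega)] at h; omega

private lemma mod_eq_helper {n a b : ℕ} (hab : a = b ∨ a = b + n ∨ b = a + n) :
    a % n = b % n := by
  rcases hab with h | h | h
  · rw [h]
  · rw [h, Nat.add_mod_right]
  · rw [h, Nat.add_mod_right]

/-- An isotopy to a group forces the quadrangle criterion. -/
private lemma quadCrit {n : ℕ} {f : Fin n → Fin n → Fin n} {G : Type} [Group G]
    {α β γ : Fin n → G} (hγ : Function.Injective γ)
    (h : ∀ x y, γ (f x y) = α x * β y)
    {x1 x2 y1 y2 z1 z2 u1 u2 : Fin n}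
    (e1 : f x1 y1 = f x2 y2) (e2 : f x1 z1 = f x2 z2) (e3 : f u1 y1 = f u2 y2) :
    f u1 z1 = f u2 z2 := by
  have a1 : α x1 * β y1 = α x2 * β y2 := by rw [← h, ← h, e1]
  have a2 : α x1 * β z1 = α x2 * β z2 := by rw [← h, ← h, e2]
  have a3 : α u1 * β y1 = α u2 * β y2 := by rw [← h, ← h, e3]
  apply hγ
  rw [h, h]
  have hb : β z1 = (α x1)⁻¹ * (α x2 * β z2) := by rw [← a2]; group
  have hy : β y1 = (α x1)⁻¹ * (α x2 * β y2) := by rw [← a1]; group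
  have hu : α u1 = (α u2 * β y2) * (β y1)⁻¹ := by rw [← a3]; group
  rw [hu, hy, hb]
  group

/-- Row-coefficient for the odd-order construction: `f x y = (coef + y) mod n`. -/
private def qcoefO (n : ℕ) (x y : Fin n) : ℕ :=
  if x.val = 0 then (if y.val % 2 = 1 then 0 else if y.val = n - 1 then 1 else 2)
  else if x.val = 1 then (if y.val = 0 then 0 else if y.val = n - 1 then 2 else 1)
  else if x.val = 2 then (if y.val = 0 then 1 else if y.val % 2 = 1 then 2 else 0)
  else x.val

private def qfO (n : ℕ) (hn : 0 < n) (x y : Fin n) : Fin n :=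
  ⟨(qcoefO n x y + y.val) % n, Nat.mod_lt _ hn⟩

private lemma qfO_row_inj (n : ℕ) (hn : 5 ≤ n) (hodd : n % 2 = 1) (hp : 0 < n) (x : Fin n) :
    Function.Injective (qfO n hp x) := by
  intro y y' h
  have hx := x.isLt; have hy := y.isLt; have hy' := y'.isLt
  have h' : (qcoefO n x y + y.val) % n = (qcoefO n x y' + y'.val) % n :=
    congrArg Fin.val h
  apply Fin.ext
  simp only [qcoefO] at h'
  split_ifs at h' <;>
    (rcases mod_inj' (by omega) (by omega) h' with hh | hh | hh <;> omega)

private lemma qfO_col_inj (n : ℕ) (hn : 5 ≤ n) (hodd : n % 2 = 1) (hp : 0 < n) (a : Fin n) :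
    Function.Injective (fun x => qfO n hp x a) := by
  intro x x' h
  have hx := x.isLt; have hx' := x'.isLt; have ha := a.isLt
  have h' : (qcoefO n x a + a.val) % n = (qcoefO n x' a + a.val) % n :=
    congrArg Fin.val h
  apply Fin.ext
  simp only [qcoefO] at h'
  split_ifs at h' <;>
    (rcases mod_inj' (by omega) (by omega) h' with hh | hh | hh <;> omega)

private def qcoefE (n : ℕ) (x y : Fin n) : ℕ :=
  if x.val = 0 ∧ (y.val = 0 ∨ y.val = n / 2) then n / 2
  else if x.val = n / 2 ∧ (y.val = 0 ∨ y.val = n / 2) then 0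
  else x.val

private def qfE (n : ℕ) (hn : 0 < n) (x y : Fin n) : Fin n :=
  ⟨(qcoefE n x y + y.val) % n, Nat.mod_lt _ hn⟩

private lemma qfE_row_inj (n : ℕ) (hn : 8 ≤ n) (hev : n % 2 = 0) (hp : 0 < n) (x : Fin n) :
    Function.Injective (qfE n hp x) := by
  intro y y' h
  have hx := x.isLt; have hy := y.isLt; have hy' := y'.isLt
  have h' : (qcoefE n x y + y.val) % n = (qcoefE n x y' + y'.val) % n :=
    congrArg Fin.val h
  apply Fin.ext
  simp only [qcoefE] at h'
  split_ifs at h' <;>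
    (rcases mod_inj' (by omega) (by omega) h' with hh | hh | hh <;> omega)

private lemma qfE_col_inj (n : ℕ) (hn : 8 ≤ n) (hev : n % 2 = 0) (hp : 0 < n) (a : Fin n) :
    Function.Injective (fun x => qfE n hp x a) := by
  intro x x' h
  have hx := x.isLt; have hx' := x'.isLt; have ha := a.isLt
  have h' : (qcoefE n x a + a.val) % n = (qcoefE n x' a + a.val) % n :=
    congrArg Fin.val h
  apply Fin.ext
  simp only [qcoefE] at h'
  split_ifs at h' <;>
    (rcases mod_inj' (by omega) (by omega) h' with hh | hh | hh <;> omega)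

set_option maxHeartbeats 1000000 in
/-- For every n ≥ 5 with n ≠ 6 there is a binary quasigroup of order n
not isotopic to any group. -/
theorem exists_nongroup_quasigroup (n : ℕ) (hn : 5 ≤ n) (hn6 : n ≠ 6) :
    ∃ f : Fin n → Fin n → Fin n,
      (∀ a : Fin n, Function.Bijective (f a) ∧ Function.Bijective (fun x => f x a)) ∧
      ¬ ∃ (G : Type) (_ : Group G) (α β γ : Fin n → G),
          Function.Bijective α ∧ Function.Bijective β ∧ Function.Bijective γ ∧
          ∀ x y : Fin n, γ (f x y) = α x * β y := by
  have hpos : 0 < n := by omega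
  rcases Nat.even_or_odd n with hpar | hpar
  · -- even case, n ≥ 8
    have hev : n % 2 = 0 := Nat.even_iff.mp hpar
    have h8 : 8 ≤ n := by omega
    refine ⟨qfE n hpos, fun a => ⟨?_, ?_⟩, ?_⟩
    · exact Finite.injective_iff_bijective.mp (qfE_row_inj n h8 hev hpos a)
    · exact Finite.injective_iff_bijective.mp (qfE_col_inj n h8 hev hpos a)
    · rintro ⟨G, hG, α, β, γ, hα, hβ, hγ, hiso⟩
      letI : Group G := hG
      have e1 : qfE n hpos ⟨2, by omega⟩ ⟨1, by omega⟩
          = qfE n hpos ⟨1, by omega⟩ ⟨2, by omega⟩ := by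
        apply Fin.ext
        simp only [qfE, qcoefE]
        split_ifs <;>
          first
          | omega
          | exact mod_eq_helper (by omega)
          | simp_all
      have e2 : qfE n hpos ⟨2, by omega⟩ ⟨0, by omega⟩
          = qfE n hpos ⟨1, by omega⟩ ⟨1, by omega⟩ := by
        apply Fin.ext
        simp only [qfE, qcoefE]
        split_ifs <;>
          first
          | omega
          | exact mod_eq_helper (by omega)
          | simp_all
      have e3 : qfE n hpos ⟨0, by omega⟩ ⟨1, by omega⟩
          = qfE n hpos ⟨n - 1, by omega⟩ ⟨2, by omega⟩ := by
        apply Fin.ext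
        simp only [qfE, qcoefE]
        split_ifs <;>
          first
          | omega
          | exact mod_eq_helper (by omega)
          | simp_all
      have hq := quadCrit hγ.injective hiso e1 e2 e3
      have h' := congrArg Fin.val hq
      simp only [qfE, qcoefE] at h'
      split_ifs at h' <;>
        first
        | omega
        | (rcases mod_inj' (by omega) (by omega) h' with hh | hh | hh <;> omega)
        | simp_all
  · -- odd case
    have hodd : n % 2 = 1 := Nat.odd_iff.mp hpar
    refine ⟨qfO n hpos, fun a => ⟨?_, ?_⟩, ?_⟩
    · exact Finite.injective_iff_bijective.mp (qfO_row_inj n hn hodd hpos a)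
    · exact Finite.injective_iff_bijective.mp (qfO_col_inj n hn hodd hpos a)
    · rintro ⟨G, hG, α, β, γ, hα, hβ, hγ, hiso⟩
      letI : Group G := hG
      have e1 : qfO n hpos ⟨4, by omega⟩ ⟨1, by omega⟩
          = qfO n hpos ⟨3, by omega⟩ ⟨2, by omega⟩ := by
        apply Fin.ext
        simp only [qfO, qcoefO]
        split_ifs <;>
          first
          | omega
          | exact mod_eq_helper (by omega)
          | simp_all
      have e2 : qfO n hpos ⟨4, by omega⟩ ⟨0, by omega⟩
          = qfO n hpos ⟨3, by omega⟩ ⟨1, by omega⟩ := by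
        apply Fin.ext
        simp only [qfO, qcoefO]
        split_ifs <;>
          first
          | omega
          | exact mod_eq_helper (by omega)
          | simp_all
      have e3 : qfO n hpos ⟨0, by omega⟩ ⟨1, by omega⟩
          = qfO n hpos ⟨n - 1, by omega⟩ ⟨2, by omega⟩ := by
        apply Fin.ext
        simp only [qfO, qcoefO]
        split_ifs <;>
          first
          | omega
          | exact mod_eq_helper (by omega)
          | simp_all
      have hq := quadCrit hγ.injective hiso e1 e2 e3
      have h' := congrArg Fin.val hq
      simp only [qfO, qcoefO] at h'
      split_ifs at h' <;>
        first
        | omega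
        | (rcases mod_inj' (by omega) (by omega) h' with hh | hh | hh <;> omega)
        | simp_all
end

section
/- A binary quasigroup (Q, ∘) is isotopic to a group if and only if it satisfies the quadrangle criterion: for all x₁, x₂, y₁, y₂, z₁, z₂, u₁, u₂ ∈ Q, if x₁∘y₁ = x₂∘y₂, x₁∘z₁ = x₂∘z₂, and u₁∘y₁ = u₂∘y₂, then u₁∘z₁ = u₂∘z₂. -/
/-- A binary quasigroup is isotopic to a group iff it satisfies the
quadrangle criterion. -/
theorem isotopic_to_group_iff_quadrangle
    {Q : Type} [Nonempty Q] (f : Q → Q → Q)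
    (hq : ∀ a : Q, Function.Bijective (f a) ∧ Function.Bijective (fun x => f x a)) :
    (∃ (G : Type) (_ : Group G) (α β γ : Q → G),
        Function.Bijective α ∧ Function.Bijective β ∧ Function.Bijective γ ∧
        ∀ x y : Q, γ (f x y) = α x * β y) ↔
    (∀ x₁ x₂ y₁ y₂ z₁ z₂ u₁ u₂ : Q,
      f x₁ y₁ = f x₂ y₂ → f x₁ z₁ = f x₂ z₂ → f u₁ y₁ = f u₂ y₂ → f u₁ z₁ = f u₂ z₂) := by
  constructor
  · rintro ⟨G, _, α, β, γ, hα, hβ, hγ, hfab⟩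
    intro x₁ x₂ y₁ y₂ z₁ z₂ u₁ u₂ h1 h2 h3
    apply hγ.1
    have e1 : α x₁ * β y₁ = α x₂ * β y₂ := by rw [← hfab, ← hfab, h1]
    have e2 : α x₁ * β z₁ = α x₂ * β z₂ := by rw [← hfab, ← hfab, h2]
    have e3 : α u₁ * β y₁ = α u₂ * β y₂ := by rw [← hfab, ← hfab, h3]
    rw [hfab, hfab]
    have a1 : β z₁ = (α x₁)⁻¹ * (α x₂ * β z₂) := by rw [← e2]; group
    have a2 : β y₁ = (α x₁)⁻¹ * (α x₂ * β y₂) := by rw [← e1]; group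
    have a3 : α u₁ = (α u₂ * β y₂) * (β y₁)⁻¹ := by rw [← e3]; group
    rw [a3, a2, a1]; group
  · intro hquad
    classical
    obtain ⟨e⟩ := ‹Nonempty Q›
    let ρ : Q ≃ Q := Equiv.ofBijective (fun x => f x e) (hq e).2
    let lam : Q ≃ Q := Equiv.ofBijective (f e) (hq e).1
    let mul : Q → Q → Q := fun a b => f (ρ.symm a) (lam.symm b)
    let one : Q := f e e
    have hρe : ρ.symm one = e := by
      have : ρ e = one := rfl
      rw [← this, Equiv.symm_apply_apply]
    have hlame : lam.symm one = e := by
      have : lam e = one := rfl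
      rw [← this, Equiv.symm_apply_apply]
    have hone_mul : ∀ b, mul one b = b := by
      intro b
      show f (ρ.symm one) (lam.symm b) = b
      rw [hρe]
      exact lam.apply_symm_apply b
    have hmul_one : ∀ a, mul a one = a := by
      intro a
      show f (ρ.symm a) (lam.symm one) = a
      rw [hlame]
      exact ρ.apply_symm_apply a
    have hquad' : ∀ x₁ x₂ y₁ y₂ z₁ z₂ u₁ u₂ : Q,
        mul x₁ y₁ = mul x₂ y₂ → mul x₁ z₁ = mul x₂ z₂ → mul u₁ y₁ = mul u₂ y₂ →
        mul u₁ z₁ = mul u₂ z₂ := by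
      intro x₁ x₂ y₁ y₂ z₁ z₂ u₁ u₂ h1 h2 h3
      exact hquad (ρ.symm x₁) (ρ.symm x₂) (lam.symm y₁) (lam.symm y₂) (lam.symm z₁)
        (lam.symm z₂) (ρ.symm u₁) (ρ.symm u₂) h1 h2 h3
    have hassoc : ∀ a b c, mul (mul a b) c = mul a (mul b c) := by
      intro a b c
      refine hquad' b one one b c (mul b c) (mul a b) a ?_ ?_ ?_
      · rw [hmul_one, hone_mul]
      · rw [hone_mul]
      · rw [hmul_one]
    have hrt : ∀ a : Q, Function.Bijective (fun x => mul x a) := by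
      intro a
      have : (fun x => mul x a) = (fun w => f w (lam.symm a)) ∘ ρ.symm := rfl
      rw [this]
      exact ((hq (lam.symm a)).2).comp ρ.symm.bijective
    let rte : Q → Q ≃ Q := fun a => Equiv.ofBijective (fun x => mul x a) (hrt a)
    let inv : Q → Q := fun a => (rte a).symm one
    have hinv : ∀ a, mul (inv a) a = one := fun a => (rte a).apply_symm_apply one
    let inst : Group Q :=
      { mul := mul, one := one, inv := inv,
        mul_assoc := hassoc, one_mul := hone_mul, mul_one := hmul_one,
        inv_mul_cancel := hinv }
    refine ⟨Q, inst, ρ, lam, id, ρ.bijective, lam.bijective, Function.bijective_id, ?_⟩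
    intro x y
    show f x y = mul (ρ x) (lam y)
    show f x y = f (ρ.symm (ρ x)) (lam.symm (lam y))
    rw [Equiv.symm_apply_apply, Equiv.symm_apply_apply]
end
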